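/- The coin-averaged transition probabilities of the Hadamard walk are symmetric: for every n ∈ ℕ and all k, j ∈ ℤ, pₙ(k, j) = pₙ(j, k), where pₙ(k, j) := ½‖(Uⁿ(δ_k ⊗ +))(j)‖² + ½‖(Uⁿ(δ_k ⊗ −))(j)‖². Equivalently, pₙ(0, m) = pₙ(0, −m) for all m ∈ ℤ. -/

import Mathlib

open scoped ENNReal

noncomputable section

/-- The state space `ℓ²(ℤ; ℂ²)` of the Hadamard quantum walk. -/
abbrev QWState : Type := lp (fun _ : ℤ => EuclideanSpace ℂ (Fin 2)) 2

/-- The walk started at site `k` with pure coin state `c`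
(`c = 0` is the coin `+`, `c = 1` is the coin `−`): the unit vector `δ_k ⊗ c`. -/
def deltaCoin (k : ℤ) (c : Fin 2) : QWState := lp.single 2 k (EuclideanSpace.single c 1)

/-! The walk acts on amplitudes `ℤ → ℂ²` by a step that commutes with translations and
anticommutes with the reflection `coinFlip` (`k ↦ -k` together with the coin map
`(a, b) ↦ (b, -a)`), which sends the coin `−` at the origin to the coin `+` there. Hence
the two walks started at the origin with coins `+` and `−` have mirror-image densities, so
their average depends only on `|j - k|`. -/

lemma EuclideanSpace.ext_fin_two {𝕜 : Type*} [RCLike 𝕜] {v w : EuclideanSpace 𝕜 (Fin 2)}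
    (h0 : v 0 = w 0) (h1 : v 1 = w 1) : v = w := by
  ext i
  fin_cases i <;> assumption

def hadamardStep (φ : ℤ → EuclideanSpace ℂ (Fin 2)) : ℤ → EuclideanSpace ℂ (Fin 2) :=
  fun k => !₂[(φ (k - 1) 0 + φ (k - 1) 1) / (Real.sqrt 2 : ℂ),
    (φ (k + 1) 0 - φ (k + 1) 1) / (Real.sqrt 2 : ℂ)]

def coinFlip (φ : ℤ → EuclideanSpace ℂ (Fin 2)) : ℤ → EuclideanSpace ℂ (Fin 2) :=
  fun k => !₂[φ (-k) 1, -φ (-k) 0]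

section HadamardStep

variable (φ : ℤ → EuclideanSpace ℂ (Fin 2))

lemma hadamardStep_smul (a : ℂ) : hadamardStep (a • φ) = a • hadamardStep φ := by
  funext j
  apply EuclideanSpace.ext_fin_two <;> simp [hadamardStep] <;> ring

lemma hadamardStep_comp_sub (k : ℤ) :
    hadamardStep (fun j => φ (j - k)) = fun j => hadamardStep φ (j - k) := by
  funext j
  simp only [hadamardStep, sub_right_comm j 1 k, sub_add_eq_add_sub]

lemma iterate_hadamardStep_comp_sub (n : ℕ) (k : ℤ) :
    hadamardStep^[n] (fun j => φ (j - k)) = fun j => hadamardStep^[n] φ (j - k) :=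
  Function.Commute.iterate_left (g := fun φ j => φ (j - k))
    (fun φ => hadamardStep_comp_sub φ k) n φ

lemma hadamardStep_coinFlip : hadamardStep (coinFlip φ) = -coinFlip (hadamardStep φ) := by
  funext j
  apply EuclideanSpace.ext_fin_two <;>
    simp [hadamardStep, coinFlip, neg_add_eq_sub] <;> ring_nf

lemma iterate_hadamardStep_coinFlip (n : ℕ) :
    hadamardStep^[n] (coinFlip φ) = (-1 : ℂ) ^ n • coinFlip (hadamardStep^[n] φ) := by
  have h := Function.Semiconj.iterate_left (f := hadamardStep)
    (g := fun n φ => (-1 : ℂ) ^ n • coinFlip φ) (fun n φ => by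
      simp only [hadamardStep_smul, hadamardStep_coinFlip, pow_succ, mul_neg_one, neg_smul,
        smul_neg])
    n 0
  simpa using h φ

lemma norm_coinFlip (j : ℤ) : ‖coinFlip φ j‖ = ‖φ (-j)‖ := by
  simp [coinFlip, EuclideanSpace.norm_eq, Fin.sum_univ_two, add_comm]

end HadamardStep

lemma coe_deltaCoin (k : ℤ) (c : Fin 2) :
    ⇑(deltaCoin k c) = fun j => deltaCoin 0 c (j - k) := by
  funext j
  rcases eq_or_ne j k with rfl | h
  · simp [deltaCoin]
  · simp [deltaCoin, h, sub_ne_zero.2 h]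

lemma coe_deltaCoin_zero_zero : ⇑(deltaCoin 0 0) = coinFlip ⇑(deltaCoin 0 1) := by
  funext j
  apply EuclideanSpace.ext_fin_two <;> by_cases h : j = 0 <;> simp [deltaCoin, coinFlip, h]

lemma coe_pow_apply_eq_iterate_hadamardStep (U : QWState →ₗ[ℂ] QWState)
    (hU : ∀ (ψ : QWState) (k : ℤ),
      (U ψ) k 0 = (ψ (k - 1) 0 + ψ (k - 1) 1) / (Real.sqrt 2 : ℂ) ∧
      (U ψ) k 1 = (ψ (k + 1) 0 - ψ (k + 1) 1) / (Real.sqrt 2 : ℂ))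
    (n : ℕ) (ψ : QWState) : ⇑((U ^ n) ψ) = hadamardStep^[n] ⇑ψ := by
  induction n with
  | zero => rfl
  | succ n ih =>
    rw [pow_succ', Module.End.mul_apply, Function.iterate_succ_apply', ← ih]
    funext k
    exact EuclideanSpace.ext_fin_two (hU _ k).1 (hU _ k).2

/-- **Symmetry of the coin-averaged Hadamard walk transition probabilities.**
Let `U` be the Hadamard quantum walk operator on `ℓ²(ℤ; ℂ²)`, defined coordinatewise by
`(Uψ)₊(k) = (ψ₊(k−1) + ψ₋(k−1))/√2` and `(Uψ)₋(k) = (ψ₊(k+1) − ψ₋(k+1))/√2`.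
With `pₙ(k, j) := ½‖(Uⁿ(δ_k ⊗ +))(j)‖² + ½‖(Uⁿ(δ_k ⊗ −))(j)‖²`, for every `n ∈ ℕ`
and all `k, j ∈ ℤ` one has `pₙ(k, j) = pₙ(j, k)`; equivalently `pₙ(0, m) = pₙ(0, −m)`
for all `m ∈ ℤ`. -/
theorem hadamard_walk_symmetric
    (U : QWState →ₗ[ℂ] QWState)
    (hU : ∀ (ψ : QWState) (k : ℤ),
      (U ψ) k 0 = (ψ (k - 1) 0 + ψ (k - 1) 1) / (Real.sqrt 2 : ℂ) ∧
      (U ψ) k 1 = (ψ (k + 1) 0 - ψ (k + 1) 1) / (Real.sqrt 2 : ℂ))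
    (p : ℕ → ℤ → ℤ → ℝ)
    (hp : ∀ (n : ℕ) (k j : ℤ), p n k j =
      (1 / 2) * ‖((U ^ n) (deltaCoin k 0)) j‖ ^ 2
        + (1 / 2) * ‖((U ^ n) (deltaCoin k 1)) j‖ ^ 2) :
    (∀ (n : ℕ) (k j : ℤ), p n k j = p n j k) ∧
    (∀ (n : ℕ) (m : ℤ), p n 0 m = p n 0 (-m)) := by
  have hshift : ∀ n k c j,
      ((U ^ n) (deltaCoin k c)) j = hadamardStep^[n] (deltaCoin 0 c) (j - k) := by
    intro n k c j
    rw [coe_pow_apply_eq_iterate_hadamardStep U hU, coe_deltaCoin,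
      iterate_hadamardStep_comp_sub]
  have hmirror : ∀ n d,
      ‖hadamardStep^[n] (deltaCoin 0 0) d‖ = ‖hadamardStep^[n] (deltaCoin 0 1) (-d)‖ := by
    intro n d
    rw [coe_deltaCoin_zero_zero, iterate_hadamardStep_coinFlip, Pi.smul_apply, norm_smul,
      norm_coinFlip]
    simp
  have htrans : ∀ n k j, p n k j = p n 0 (j - k) := by
    intro n k j
    simp only [hp, hshift, sub_zero]
  have heven : ∀ n d, p n 0 d = p n 0 (-d) := by
    intro n d
    rw [hp, hp, hshift, hshift, hshift, hshift, hmirror n, hmirror n (-d - 0)]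
    simp only [sub_zero, neg_neg]
    ring
  exact ⟨fun n k j => by rw [htrans, htrans n j, heven, neg_sub], heven⟩

end
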